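/- arXiv:1312.4628 — 2 statements merged into one kernel-verified Lean document; each statement's English description precedes it below -/
import Mathlib

section
/- The function g(x) = f(x)^(1/x), where f(x) = (x^3 + 3x^2 + 2x + 2)/2, is (weakly) decreasing for x ≥ 1. -/
/-!
Write `g x = exp (log (f x) / x)`. The derivative of `log (f x) / x` has the sign of
`x f'(x) - f(x) log f(x)`, so it suffices that `x f'(x) ≤ f(x) log f(x)` for `x ≥ 1`.
Since `x f'(x) ≤ 3 f(x)` for `x ≥ 0`, this holds once `f(x) ≥ e³`, in particular for `x ≥ 5/2`.
On `[1, 5/2]` it follows from `log f ≥ log 4 + 1 - 4 / f` (from `log t ≥ 1 - 1/t` at `t = f/4`)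
and `log 4 > 1.386`, leaving a polynomial inequality.
-/

/-- `f(x) = (x³ + 3x² + 2x + 2)/2`. -/
noncomputable def f (x : ℝ) : ℝ := (x ^ 3 + 3 * x ^ 2 + 2 * x + 2) / 2

/-- `g(x) = f(x)^(1/x)`. -/
noncomputable def g (x : ℝ) : ℝ := f x ^ (1 / x)

open Real Set

theorem antitoneOn_rpow_one_div_of_mul_deriv_le_mul_log {F F' : ℝ → ℝ} {a : ℝ} (ha : 0 < a)
    (hF : ∀ x ∈ Ici a, HasDerivAt F (F' x) x) (hpos : ∀ x ∈ Ici a, 0 < F x)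
    (hle : ∀ x ∈ Ioi a, x * F' x ≤ F x * log (F x)) :
    AntitoneOn (fun x => F x ^ (1 / x)) (Ici a) := by
  have hx0 : ∀ x ∈ Ici a, x ≠ 0 := fun x hx => (ha.trans_le hx).ne'
  have hderiv : ∀ x ∈ Ici a, HasDerivAt (fun x => log (F x) / x)
      ((F' x / F x * x - log (F x) * 1) / x ^ 2) x := fun x hx =>
    ((hF x hx).log (hpos x hx).ne').div (hasDerivAt_id x) (hx0 x hx)
  have hlog : AntitoneOn (fun x => log (F x) / x) (Ici a) := by
    apply antitoneOn_of_deriv_nonpos (convex_Ici a)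
    · exact fun x hx => (hderiv x hx).continuousAt.continuousWithinAt
    · rw [interior_Ici]
      exact fun x hx => (hderiv x (Ioi_subset_Ici_self hx)).differentiableAt.differentiableWithinAt
    · rw [interior_Ici]
      intro x hx
      rw [(hderiv x (Ioi_subset_Ici_self hx)).deriv]
      have hFx := hpos x (Ioi_subset_Ici_self hx)
      have : F' x / F x * x ≤ log (F x) := by
        rw [div_mul_eq_mul_div, div_le_iff₀ hFx, mul_comm (F' x), mul_comm (log _)]
        exact hle x hx
      exact div_nonpos_of_nonpos_of_nonneg (by linarith) (sq_nonneg x)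
  intro x hx y hy hxy
  simp only [rpow_def_of_pos (hpos x hx), rpow_def_of_pos (hpos y hy), mul_one_div]
  exact exp_le_exp.2 (hlog hx hy hxy)

theorem log_add_one_sub_div_le_log {a y : ℝ} (ha : 0 < a) (hy : 0 < y) :
    log a + 1 - a / y ≤ log y := by
  have h := one_sub_inv_le_log_of_pos (div_pos hy ha)
  rw [inv_div, log_div hy.ne' ha.ne'] at h
  linarith

theorem hasDerivAt_f (x : ℝ) : HasDerivAt f ((3 * x ^ 2 + 6 * x + 2) / 2) x := by
  have h := (((((hasDerivAt_id x).pow 3).add (((hasDerivAt_id x).pow 2).const_mul 3)).add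
    ((hasDerivAt_id x).const_mul 2)).add_const 2).div_const 2
  exact h.congr_deriv (by simp only [id_eq, Nat.cast_ofNat, Nat.add_one_sub_one, pow_one]; ring)

theorem four_le_f {x : ℝ} (hx : 1 ≤ x) : 4 ≤ f x := by
  unfold f; nlinarith [sq_nonneg (x - 1), sq_nonneg x]

theorem mul_deriv_f_le_three_mul_f {x : ℝ} (hx : 0 ≤ x) :
    x * ((3 * x ^ 2 + 6 * x + 2) / 2) ≤ 3 * f x := by
  unfold f; nlinarith [sq_nonneg x]

theorem three_le_log_f {x : ℝ} (hx : 5 / 2 ≤ x) : 3 ≤ log (f x) := by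
  have hf : 20.6875 ≤ f x := by
    unfold f; nlinarith [sq_nonneg (x - 5 / 2), sq_nonneg x]
  have he : exp 3 < 20.6875 :=
    calc exp 3 = exp 1 ^ 3 := by rw [← exp_nat_mul]; norm_num
      _ < 2.7182818286 ^ 3 := pow_lt_pow_left₀ exp_one_lt_d9 (exp_pos 1).le (by norm_num)
      _ < 20.6875 := by norm_num
  rw [le_log_iff_exp_le (by linarith)]
  linarith

theorem mul_deriv_f_le_f_mul_log_f {x : ℝ} (hx : 1 ≤ x) :
    x * ((3 * x ^ 2 + 6 * x + 2) / 2) ≤ f x * log (f x) := by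
  have hf := four_le_f hx
  rcases le_or_gt x (5 / 2) with hx' | hx'
  · have hlog4 : 1.386 < log 4 := by
      rw [show (4 : ℝ) = 2 ^ 2 by norm_num, log_pow]
      linarith [log_two_gt_d9]
    calc x * ((3 * x ^ 2 + 6 * x + 2) / 2) ≤ f x * (1.386 + 1) - 4 := by
          unfold f
          nlinarith [mul_nonneg (sub_nonneg.2 hx) (sub_nonneg.2 hx'),
            mul_nonneg (mul_nonneg (sub_nonneg.2 hx) (sub_nonneg.2 hx)) (sub_nonneg.2 hx')]
      _ ≤ f x * (log 4 + 1) - 4 := by gcongr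
      _ = f x * (log 4 + 1 - 4 / f x) := by field_simp
      _ ≤ f x * log (f x) :=
        mul_le_mul_of_nonneg_left (log_add_one_sub_div_le_log four_pos (by linarith)) (by linarith)
  · calc x * ((3 * x ^ 2 + 6 * x + 2) / 2) ≤ 3 * f x := mul_deriv_f_le_three_mul_f (by linarith)
      _ ≤ f x * log (f x) := by nlinarith [three_le_log_f hx'.le]

/-- `g` is weakly decreasing on `[1, ∞)`. -/
theorem g_antitone : AntitoneOn g (Set.Ici (1 : ℝ)) :=
  antitoneOn_rpow_one_div_of_mul_deriv_le_mul_log one_pos (fun x _ => hasDerivAt_f x)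
    (fun _ hx => by linarith [four_le_f hx]) (fun _ hx => mul_deriv_f_le_f_mul_log_f (le_of_lt hx))
end

section
/- Let n_1, ..., n_k be integers with n_i ≥ 3 for all i and ∑ n_i = n. With f(x) = (x^3 + 3x^2 + 2x + 2)/2, the product ∏_{i=1}^k f(n_i) is at most f(3)^(n/3) = 31^(n/3). -/
lemma f_pos {x : ℝ} (hx : 3 ≤ x) : 0 < f x := by
  unfold f; nlinarith

lemma cube_le (m : ℕ) (hm : 3 ≤ m) : f m ^ 3 ≤ 31 ^ m := by
  induction m, hm using Nat.le_induction with
  | base => norm_num [f]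
  | succ m hm ih =>
    have hm' : (3 : ℝ) ≤ m := by exact_mod_cast hm
    have step : f ((m : ℝ) + 1) ^ 3 ≤ 31 * f m ^ 3 := by
      unfold f
      nlinarith [pow_nonneg (sub_nonneg.2 hm') 2, pow_nonneg (sub_nonneg.2 hm') 3,
        pow_nonneg (sub_nonneg.2 hm') 4, pow_nonneg (sub_nonneg.2 hm') 5,
        pow_nonneg (sub_nonneg.2 hm') 6, pow_nonneg (sub_nonneg.2 hm') 7,
        pow_nonneg (sub_nonneg.2 hm') 8, pow_nonneg (sub_nonneg.2 hm') 9]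
    push_cast
    calc f ((m : ℝ) + 1) ^ 3 ≤ 31 * f m ^ 3 := step
      _ ≤ 31 * 31 ^ m := by linarith
      _ = 31 ^ (m + 1) := by ring

lemma key (m : ℕ) (hm : 3 ≤ m) : f m ≤ (31 : ℝ) ^ ((m : ℝ) / 3) := by
  have hm' : (3 : ℝ) ≤ m := by exact_mod_cast hm
  have hf := f_pos hm'
  have h := cube_le m hm
  have h3 : f m = ((f m ^ 3 : ℝ)) ^ ((1 : ℝ)/3) := by
    rw [← Real.rpow_natCast (f m) 3, ← Real.rpow_mul hf.le]
    norm_num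
  rw [h3]
  calc ((f m ^ 3 : ℝ)) ^ ((1:ℝ)/3) ≤ ((31 : ℝ) ^ m) ^ ((1:ℝ)/3) := by
        apply Real.rpow_le_rpow (by positivity) h (by norm_num)
    _ = (31 : ℝ) ^ ((m : ℝ) / 3) := by
        rw [← Real.rpow_natCast (31 : ℝ) m, ← Real.rpow_mul (by norm_num)]
        ring_nf

/-- If `n₁, …, n_k` are integers with `nᵢ ≥ 3` summing to `n`, then
`∏ f(nᵢ) ≤ f(3)^(n/3) = 31^(n/3)`. -/
theorem prod_f_le_thirtyone_rpow (n k : ℕ) (a : Fin k → ℕ)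
    (ha : ∀ i, 3 ≤ a i) (hsum : ∑ i, a i = n) :
    ∏ i, f ((a i : ℝ)) ≤ (31 : ℝ) ^ ((n : ℝ) / 3) := by
  have h1 : ∏ i, f ((a i : ℝ)) ≤ ∏ i, (31 : ℝ) ^ (((a i : ℝ)) / 3) := by
    apply Finset.prod_le_prod
    · intro i _
      exact (f_pos (by exact_mod_cast ha i)).le
    · intro i _
      exact key (a i) (ha i)
  refine h1.trans_eq ?_
  rw [← Real.rpow_sum_of_pos (by norm_num : (0:ℝ) < 31)]
  congr 1
  rw [← Finset.sum_div]
  congr 1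
  exact_mod_cast hsum
end
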